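/- If |x'|² + (1 + δ' − xₙ)² + (C̃δ' − v)² = 1 with 0 ≤ −v ≤ Axₙ, xₙ ∈ [0, 1/2], δ' ∈ [0, δ₀], C̃ ≥ 1, and δ₀ sufficiently small, then xₙ ≤ A'δ' for a constant A' depending only on A and C̃. -/

import Mathlib

/-!
Subtracting the ball inequality from the sphere equation, the `|x'|²` terms cancel and
`(1 + δ' - xₙ)² - (1/2 - xₙ)² = 3/4 + 2δ' + δ'² - xₙ(1 + 2δ')`, so
`xₙ(1 + 2δ') ≤ 2δ' + (1 + C̃²)δ'² - 2C̃δ'v ≤ 2δ' + (1 + C̃²)δ'² + 2C̃Aδ'xₙ`.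
Once `δ'` is so small that `2C̃Aδ' ≤ 1/2`, the last term is absorbed into the left side.
-/

theorem mul_one_add_two_mul_le_of_sphere_of_ball {s xn v δ' Ct : ℝ}
    (hsphere : s + (1 + δ' - xn) ^ 2 + (Ct * δ' - v) ^ 2 = 1)
    (hball : s + (1 / 2 - xn) ^ 2 + v ^ 2 ≤ 1 / 4) :
    xn * (1 + 2 * δ') ≤ 2 * δ' + (1 + Ct ^ 2) * δ' ^ 2 - 2 * Ct * δ' * v := by
  linear_combination hball - hsphere

theorem le_mul_of_mul_one_add_two_mul_le {xn δ' A Ct : ℝ} (hxn : 0 ≤ xn) (hδ' : 0 ≤ δ')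
    (hδ'_le_one : δ' ≤ 1) (hsmall : 4 * Ct * A * δ' ≤ 1)
    (h : xn * (1 + 2 * δ') ≤ 2 * δ' + (1 + Ct ^ 2) * δ' ^ 2 + 2 * Ct * A * δ' * xn) :
    xn ≤ 2 * (3 + Ct ^ 2) * δ' := by
  have hquad : (1 + Ct ^ 2) * δ' ^ 2 ≤ (1 + Ct ^ 2) * δ' :=
    mul_le_mul_of_nonneg_left (pow_le_of_le_one hδ' hδ'_le_one two_ne_zero) (by positivity)
  nlinarith [mul_le_mul_of_nonneg_right hsmall hxn, mul_nonneg hxn hδ']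

/-- Elementary estimate from the reflection argument: if a graph point satisfies the sphere
condition `|x'|² + (1+δ'-xₙ)² + (C̃δ'-v)² = 1`, lies in the ball `B_{1/2}(0,…,0,1/2,0)`
(so `|x'|² + (1/2-xₙ)² + v² ≤ 1/4`), and `0 ≤ -v ≤ A xₙ`, `xₙ ∈ [0,1/2]`, `δ' ∈ [0,δ₀]`,
`C̃ ≥ 1`, then for `δ₀` sufficiently small `xₙ ≤ A' δ'` with `A'` depending only on
`A` and `C̃`. -/
theorem stmt17 (A Ct : ℝ) (hA : 0 ≤ A) (hCt : 1 ≤ Ct) :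
    ∃ δ₀ > (0:ℝ), ∃ A' > (0:ℝ), ∀ (k : ℕ) (x' : Fin k → ℝ) (xn v δ' : ℝ),
      (∑ i, (x' i) ^ 2) + (1 + δ' - xn) ^ 2 + (Ct * δ' - v) ^ 2 = 1 →
      (∑ i, (x' i) ^ 2) + (1 / 2 - xn) ^ 2 + v ^ 2 ≤ 1 / 4 →
      0 ≤ -v → -v ≤ A * xn →
      0 ≤ xn → xn ≤ 1 / 2 →
      0 ≤ δ' → δ' ≤ δ₀ →
      xn ≤ A' * δ' := by
  have hCt0 : 0 < Ct := one_pos.trans_le hCt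
  refine ⟨1 / (4 * Ct * (A + 1)), by positivity, 2 * (3 + Ct ^ 2), by positivity, ?_⟩
  intro k x' xn v δ' hsphere hball _ hv hxn _ hδ' hδ'δ₀
  have hsmall : 4 * Ct * (A + 1) * δ' ≤ 1 := by
    rwa [le_div_iff₀' (by positivity)] at hδ'δ₀
  have hδ'_le_one : δ' ≤ 1 := by
    have : 1 ≤ Ct * (A + 1) := one_le_mul_of_one_le_of_one_le hCt (by linarith)
    nlinarith [mul_le_mul_of_nonneg_right this hδ']
  have hcross : -(2 * Ct * δ' * v) ≤ 2 * Ct * A * δ' * xn := by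
    nlinarith [mul_le_mul_of_nonneg_left hv (by positivity : 0 ≤ 2 * Ct * δ')]
  refine le_mul_of_mul_one_add_two_mul_le (A := A) hxn hδ' hδ'_le_one (by nlinarith) ?_
  linarith [mul_one_add_two_mul_le_of_sphere_of_ball hsphere hball]
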